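/- With 𝔐₁ and 𝔐₂ as defined from two height functions h^ε, h on ℝ², suppose |∇h^ε| ≤ K and |∇h| ≤ K pointwise for some K ≥ 0. Then pointwise 𝔐₁ − |𝔐₂| |∇(h^ε+h)|² ≥ 4|𝔐₂|·c for some constant c > 0 depending only on K; in particular there exists δ_σ > 0 (depending only on K) such that for every ξ ∈ ℝ², 𝔐₁|ξ|² + 𝔐₂|ξ·∇(h^ε+h)|² ≥ δ_σ |ξ|². -/

import Mathlib

/-!
Write `A = √(1 + |a|²)`, `B = √(1 + |b|²)`. Then `𝔐₁ = (A + B)² |𝔐₂|`, so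
`𝔐₁ − |𝔐₂| |a + b|² = |𝔐₂| ((A + B)² − |a + b|²)`. Since `A` and `B` are the Euclidean norms
of `(1, a)` and `(1, b)`, the triangle inequality for `(1, a) + (1, b) = (2, a + b)` gives
`4 + |a + b|² ≤ (A + B)²`, which is the first claim with `c = 1`. With Cauchy–Schwarz it yields
`𝔐₁|ξ|² + 𝔐₂ (ξ · (a + b))² ≥ 4 |𝔐₂| |ξ|²`, and `4|𝔐₂| = 2 / (A B (A + B)) ≥ (1 + K²)^(-3/2)`.
-/

open RealInnerProductSpace

section

variable {E : Type*} [SeminormedAddCommGroup E]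

lemma sqrt_one_add_norm_sq_eq_norm_toLp (a : E) :
    √(1 + ‖a‖ ^ 2) = ‖WithLp.toLp 2 ((1 : ℝ), a)‖ := by
  rw [WithLp.prod_norm_eq_of_L2]
  simp

lemma four_add_norm_add_sq_le (a b : E) :
    4 + ‖a + b‖ ^ 2 ≤ (√(1 + ‖a‖ ^ 2) + √(1 + ‖b‖ ^ 2)) ^ 2 := by
  have htri := norm_add_le (WithLp.toLp 2 ((1 : ℝ), a)) (WithLp.toLp 2 ((1 : ℝ), b))
  rw [← WithLp.toLp_add, Prod.mk_add_mk, WithLp.prod_norm_eq_of_L2,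
    ← sqrt_one_add_norm_sq_eq_norm_toLp, ← sqrt_one_add_norm_sq_eq_norm_toLp] at htri
  have h4 : ‖(1 : ℝ) + 1‖ ^ 2 = 4 := by norm_num
  simp only [WithLp.toLp_fst, WithLp.toLp_snd, h4] at htri
  calc 4 + ‖a + b‖ ^ 2 = √(4 + ‖a + b‖ ^ 2) ^ 2 := (Real.sq_sqrt (by positivity)).symm
    _ ≤ _ := by gcongr

end

section

variable {E : Type*} [NormedAddCommGroup E] [InnerProductSpace ℝ E]

lemma sq_inner_le_norm_sq_mul_norm_sq (ξ v : E) : ⟪ξ, v⟫ ^ 2 ≤ ‖ξ‖ ^ 2 * ‖v‖ ^ 2 := by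
  rw [← mul_pow, ← sq_abs]
  exact pow_le_pow_left₀ (abs_nonneg _) (abs_real_inner_le_norm ξ v) 2

lemma le_add_mul_inner_sq_of_le_sub {M₁ M₂ δ : ℝ} {v : E}
    (hM : 4 * |M₂| ≤ M₁ - |M₂| * ‖v‖ ^ 2) (hδ : δ ≤ 4 * |M₂|) (ξ : E) :
    δ * ‖ξ‖ ^ 2 ≤ M₁ * ‖ξ‖ ^ 2 + M₂ * ⟪ξ, v⟫ ^ 2 := by
  have hCS : -|M₂| * (‖ξ‖ ^ 2 * ‖v‖ ^ 2) ≤ M₂ * ⟪ξ, v⟫ ^ 2 := by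
    have := mul_le_mul_of_nonneg_left (sq_inner_le_norm_sq_mul_norm_sq ξ v) (abs_nonneg M₂)
    nlinarith [neg_abs_le M₂, sq_nonneg ⟪ξ, v⟫]
  nlinarith [mul_le_mul_of_nonneg_right (hδ.trans hM) (sq_nonneg ‖ξ‖)]

end

lemma abs_neg_one_div (x : ℝ) (hx : 0 < x) : |-1 / x| = 1 / x := by
  rw [abs_div, abs_neg, abs_one, abs_of_pos hx]

lemma four_mul_le_sub_of_four_add_le {A B s : ℝ} (hA : 0 < A) (hB : 0 < B)
    (h : 4 + s ≤ (A + B) ^ 2) :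
    4 * |-1 / (2 * A * B * (A + B))| ≤
      1 / (2 * A) + 1 / (2 * B) - |-1 / (2 * A * B * (A + B))| * s := by
  have hM₁ : 1 / (2 * A) + 1 / (2 * B) = (A + B) ^ 2 * (1 / (2 * A * B * (A + B))) := by
    field_simp
    ring
  have hm : 0 < 1 / (2 * A * B * (A + B)) := by positivity
  rw [abs_neg_one_div _ (by positivity), hM₁]
  nlinarith [mul_le_mul_of_nonneg_right h hm.le]

lemma inv_pow_three_le_four_mul {A B S : ℝ} (hA : 0 < A) (hB : 0 < B) (hAS : A ≤ S)
    (hBS : B ≤ S) :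
    1 / S ^ 3 ≤ 4 * |-1 / (2 * A * B * (A + B))| := by
  have hS : 0 < S := hA.trans_le hAS
  rw [abs_neg_one_div _ (by positivity), mul_one_div, div_le_div_iff₀ (by positivity) (by positivity)]
  have hAB : A * B ≤ S * S := mul_le_mul hAS hBS hB.le (hA.le.trans hAS)
  nlinarith [mul_le_mul hAB (add_le_add hAS hBS) (by positivity) (by positivity)]

theorem surface_tension_coercivity_general (K : ℝ) :
    ∃ c > (0 : ℝ), ∃ δσ > (0 : ℝ),
      ∀ a b : EuclideanSpace ℝ (Fin 2), ‖a‖ ≤ K → ‖b‖ ≤ K →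
        let A := Real.sqrt (1 + ‖a‖ ^ 2)
        let B := Real.sqrt (1 + ‖b‖ ^ 2)
        let M₁ := 1 / (2 * A) + 1 / (2 * B)
        let M₂ := -1 / (2 * A * B * (A + B))
        4 * |M₂| * c ≤ M₁ - |M₂| * ‖a + b‖ ^ 2 ∧
        ∀ ξ : EuclideanSpace ℝ (Fin 2),
          δσ * ‖ξ‖ ^ 2 ≤ M₁ * ‖ξ‖ ^ 2 + M₂ * ⟪ξ, a + b⟫ ^ 2 := by
  refine ⟨1, one_pos, 1 / √(1 + K ^ 2) ^ 3, by positivity, fun a b ha hb => ?_⟩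
  have hA : 0 < √(1 + ‖a‖ ^ 2) := by positivity
  have hB : 0 < √(1 + ‖b‖ ^ 2) := by positivity
  have hAS : √(1 + ‖a‖ ^ 2) ≤ √(1 + K ^ 2) := by gcongr
  have hBS : √(1 + ‖b‖ ^ 2) ≤ √(1 + K ^ 2) := by gcongr
  have hM := four_mul_le_sub_of_four_add_le hA hB (four_add_norm_add_sq_le a b)
  intro A B M₁ M₂
  rw [mul_one]
  exact ⟨hM, le_add_mul_inner_sq_of_le_sub hM (inv_pow_three_le_four_mul hA hB hAS hBS)⟩

/-- if `|∇h^ε| ≤ K` and `|∇h| ≤ K` pointwise, then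
`𝔐₁ − |𝔐₂||∇(h^ε+h)|² ≥ 4|𝔐₂|c` for some `c > 0` depending only on `K`, and there is
`δ_σ > 0` (depending only on `K`) such that
`𝔐₁|ξ|² + 𝔐₂|ξ·∇(h^ε+h)|² ≥ δ_σ|ξ|²` for every `ξ ∈ ℝ²`. -/
theorem surface_tension_coercivity (K : ℝ) (hK : 0 ≤ K) :
    ∃ c > (0 : ℝ), ∃ δσ > (0 : ℝ),
      ∀ a b : EuclideanSpace ℝ (Fin 2), ‖a‖ ≤ K → ‖b‖ ≤ K →
        let A := Real.sqrt (1 + ‖a‖ ^ 2)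
        let B := Real.sqrt (1 + ‖b‖ ^ 2)
        let M₁ := 1 / (2 * A) + 1 / (2 * B)
        let M₂ := -1 / (2 * A * B * (A + B))
        4 * |M₂| * c ≤ M₁ - |M₂| * ‖a + b‖ ^ 2 ∧
        ∀ ξ : EuclideanSpace ℝ (Fin 2),
          δσ * ‖ξ‖ ^ 2 ≤ M₁ * ‖ξ‖ ^ 2 + M₂ * ⟪ξ, a + b⟫ ^ 2 :=
  surface_tension_coercivity_general K
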